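/- arXiv:2604.26659 — 4 statements merged into one kernel-verified Lean document; each statement's English description precedes it below -/
import Mathlib

section
/- Let f = x_1^{d_1} x_2 + x_2^{d_2} x_3 + … + x_{n-1}^{d_{n-1}} x_n + x_n^{d_n} x_1 with all d_i ≥ 2 be the loop-type invertible polynomial in n variables over ℂ. Then f has an isolated critical point at the origin (i.e., the origin is the only common zero of all partial derivatives of f in a neighborhood of 0). -/
open MvPolynomial

/-- Evaluation of the `j`-th partial derivative of the loop polynomial. -/
lemma loop_deriv_eval (n : ℕ) (x : Fin (n+1) → ℂ) (j : Fin (n+1)) (d : Fin (n+1) → ℕ) :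
    eval x (pderiv j (∑ i : Fin (n+1), (X i : MvPolynomial (Fin (n+1)) ℂ) ^ d i * X (i + 1))) =
      (d j : ℂ) * x j ^ (d j - 1) * x (j+1) + x (j-1) ^ d (j-1) := by
  rw [map_sum, map_sum]
  have hterm : ∀ i : Fin (n+1),
      eval x (pderiv j ((X i : MvPolynomial (Fin (n+1)) ℂ) ^ d i * X (i + 1))) =
      (if i = j then (d i : ℂ) * x i ^ (d i - 1) * x (i+1) else 0)
      + (if i = j - 1 then x i ^ d i else 0) := by
    intro i
    have h3 : (i + 1 = j) ↔ (i = j - 1) := by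
      constructor <;> intro h <;> subst h <;> simp
    rw [pderiv_mul, pderiv_pow, pderiv_X, pderiv_X, Pi.single_apply, Pi.single_apply]
    simp only [h3]
    by_cases h1 : i = j <;> by_cases h2 : i = j - 1 <;>
      simp [h1, h2, apply_ite (eval x)]
  simp only [hterm, Finset.sum_add_distrib, Finset.sum_ite_eq', Finset.mem_univ, if_true]

open Fin.NatCast in
/-- Algebraic core: a common zero of all the partials of the loop polynomial is `0`. -/
lemma loop_crit_eq_zero (n : ℕ) (d : Fin (n + 1) → ℕ) (hd : ∀ i, 2 ≤ d i)
    (x : Fin (n + 1) → ℂ)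
    (h : ∀ j : Fin (n+1), (d j : ℂ) * x j ^ (d j - 1) * x (j+1) + x (j-1) ^ d (j-1) = 0) :
    x = 0 := by
  by_cases hz : ∃ j, x j = 0
  · obtain ⟨j, hj⟩ := hz
    have step : ∀ k : Fin (n+1), x k = 0 → x (k - 1) = 0 := by
      intro k hk
      have hpow : x (k-1) ^ d (k-1) = 0 := by
        simpa [hk, zero_pow (show d k - 1 ≠ 0 by have := hd k; omega)] using h k
      exact pow_eq_zero_iff (show d (k-1) ≠ 0 by have := hd (k-1); omega) |>.mp hpow
    have all : ∀ m : ℕ, x (j - (m : Fin (n+1))) = 0 := by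
      intro m
      induction m with
      | zero => simpa using hj
      | succ m ih =>
        have : (j - ((m+1 : ℕ) : Fin (n+1))) = (j - (m : Fin (n+1))) - 1 := by
          push_cast; abel
        rw [this]; exact step _ ih
    funext k
    have : x (j - ((j - k).val : Fin (n+1))) = 0 := all (j - k).val
    simpa [Fin.cast_val_eq_self] using this
  · push_neg at hz
    exfalso
    set r : Fin (n+1) → ℝ := fun j => ‖x j‖ with hr
    have hrpos : ∀ j, 0 < r j := fun j => by
      simpa [hr] using (norm_pos_iff.mpr (hz j))
    have heq : ∀ j, (d j : ℝ) * r j ^ (d j - 1) * r (j+1) = r (j-1) ^ d (j-1) := by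
      intro j
      have h2 : (d j : ℂ) * x j ^ (d j - 1) * x (j+1) = - (x (j-1) ^ d (j-1)) := by
        linear_combination h j
      have := congrArg norm h2
      simpa [hr, map_mul, map_pow, norm_neg, Complex.norm_natCast] using this
    have hprod := Finset.prod_congr rfl (fun j (_ : j ∈ Finset.univ) => heq j)
    rw [Finset.prod_mul_distrib, Finset.prod_mul_distrib] at hprod
    have e1 : ∏ j : Fin (n+1), r (j + 1) = ∏ j : Fin (n+1), r j :=
      Fintype.prod_equiv (Equiv.addRight 1) _ _ (fun j => rfl)
    have e2 : ∏ j : Fin (n+1), r (j-1) ^ d (j-1) = ∏ j : Fin (n+1), r j ^ d j :=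
      Fintype.prod_equiv (Equiv.subRight 1) _ _ (fun j => rfl)
    rw [e1, e2] at hprod
    have key : (∏ j : Fin (n+1), r j ^ (d j - 1)) * ∏ j : Fin (n+1), r j
        = ∏ j : Fin (n+1), r j ^ d j := by
      rw [← Finset.prod_mul_distrib]
      apply Finset.prod_congr rfl
      intro j _
      rw [← pow_succ]
      congr 1
      have := hd j; omega
    set Q : ℝ := (∏ j : Fin (n+1), r j ^ (d j - 1)) * ∏ j : Fin (n+1), r j with hQ
    have hQpos : 0 < Q :=
      mul_pos (Finset.prod_pos fun j _ => pow_pos (hrpos j) _)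
        (Finset.prod_pos fun j _ => hrpos j)
    have hPQ : (∏ j : Fin (n+1), (d j : ℝ)) * Q = 1 * Q := by
      rw [one_mul, hQ]; linear_combination hprod - key
    have hd1 : (∏ j : Fin (n+1), (d j : ℝ)) = 1 := mul_right_cancel₀ (ne_of_gt hQpos) hPQ
    have h2le : (2:ℝ)^(n+1) ≤ ∏ j : Fin (n+1), (d j : ℝ) := by
      calc (2:ℝ)^(n+1) = ∏ _j : Fin (n+1), (2:ℝ) := by simp
        _ ≤ _ := Finset.prod_le_prod (fun _ _ => by norm_num) (fun j _ => by exact_mod_cast hd j)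
    have h21 : (2:ℝ) ≤ 2^(n+1) := by
      calc (2:ℝ) = 2^1 := by norm_num
        _ ≤ 2^(n+1) := pow_le_pow_right₀ one_le_two (by omega)
    linarith [hd1 ▸ h2le]

/-- The loop polynomial `f = ∑ Xᵢ^{dᵢ} X_{i+1}` (indices cyclic, all `dᵢ ≥ 2`)
has an isolated critical point at the origin. -/
theorem stmt2 (n : ℕ) (d : Fin (n + 1) → ℕ) (hd : ∀ i, 2 ≤ d i)
    (f : MvPolynomial (Fin (n + 1)) ℂ)
    (hf : f = ∑ i : Fin (n + 1), X i ^ d i * X (i + 1)) :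
    ∃ U ∈ nhds (0 : Fin (n + 1) → ℂ), ∀ x ∈ U,
      (∀ i : Fin (n + 1), eval x (pderiv i f) = 0) → x = 0 := by
  refine ⟨Set.univ, Filter.univ_mem, fun x _ h => ?_⟩
  apply loop_crit_eq_zero n d hd x
  intro j
  rw [← loop_deriv_eval n x j d, ← hf]
  exact h j
end

section
/- Let f : (ℂ^n, 0) → (ℂ, 0) be a holomorphic germ of the form f(x) = x_1² + … + x_k² + h(x_{k+1}, …, x_n). Then the Jacobian algebra ℂ{x_1,…,x_n}/J_f is isomorphic as a ℂ-algebra to ℂ{x_{k+1},…,x_n}/J_h; in particular μ(f) = μ(h). -/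
open MvPolynomial
open Finsupp

noncomputable section Aux
open scoped Classical

variable {σ τ : Type*}

/-- push a monomial exponent on `τ` to one on `σ ⊕ τ`. -/
def inr' (d : τ →₀ ℕ) : (σ ⊕ τ) →₀ ℕ := Finsupp.mapDomain Sum.inr d

lemma inr'_inj : Function.Injective (inr' (σ := σ) (τ := τ)) :=
  Finsupp.mapDomain_injective Sum.inr_injective

lemma inr'_add (a b : τ →₀ ℕ) : inr' (σ := σ) (a + b) = inr' a + inr' b :=
  Finsupp.mapDomain_add

lemma inr'_apply_inl (d : τ →₀ ℕ) (a : σ) : (inr' d : (σ ⊕ τ) →₀ ℕ) (Sum.inl a) = 0 :=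
  Finsupp.mapDomain_notin_range _ _ (by simp)

lemma inr'_eq_zero_iff {d : τ →₀ ℕ} : inr' (σ := σ) d = 0 ↔ d = 0 := by
  constructor
  · intro h; apply inr'_inj (σ := σ); simpa [inr'] using h
  · rintro rfl; simp [inr']

lemma inr'_comap (p : (σ ⊕ τ) →₀ ℕ) (hp : ∀ a, p (Sum.inl a) = 0) :
    inr' (Finsupp.comapDomain Sum.inr p Sum.inr_injective.injOn) = p := by
  rw [inr', Finsupp.mapDomain_comapDomain Sum.inr Sum.inr_injective p ?_]
  intro x hx
  rcases x with a | b
  · simp [Finsupp.mem_support_iff, hp a] at hx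
  · exact ⟨b, rfl⟩

lemma exists_inr' (p : (σ ⊕ τ) →₀ ℕ) (hp : ∀ a, p (Sum.inl a) = 0) :
    ∃ q : τ →₀ ℕ, inr' q = p :=
  ⟨_, inr'_comap p hp⟩

lemma sum_antidiagonal_inr' {M : Type*} [AddCommMonoid M] (d : τ →₀ ℕ)
    (F : ((σ ⊕ τ) →₀ ℕ) × ((σ ⊕ τ) →₀ ℕ) → M) :
    ∑ p ∈ Finset.HasAntidiagonal.antidiagonal (inr' (σ := σ) d), F p
      = ∑ p ∈ Finset.HasAntidiagonal.antidiagonal d, F (inr' p.1, inr' p.2) := by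
  refine Finset.sum_nbij' (i := fun p => (Finsupp.comapDomain Sum.inr p.1 Sum.inr_injective.injOn,
      Finsupp.comapDomain Sum.inr p.2 Sum.inr_injective.injOn))
    (j := fun p => (inr' p.1, inr' p.2)) ?_ ?_ ?_ ?_ ?_
  · intro p hp
    rw [Finset.HasAntidiagonal.mem_antidiagonal] at hp ⊢
    have h1 : ∀ a, p.1 (Sum.inl a) = 0 := by
      intro a
      have := DFunLike.congr_fun hp (Sum.inl a)
      simp only [Finsupp.add_apply, inr'_apply_inl] at this
      omega
    have h2 : ∀ a, p.2 (Sum.inl a) = 0 := by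
      intro a
      have := DFunLike.congr_fun hp (Sum.inl a)
      simp only [Finsupp.add_apply, inr'_apply_inl] at this
      omega
    apply inr'_inj (σ := σ)
    dsimp only
    rw [inr'_add, inr'_comap p.1 h1, inr'_comap p.2 h2]
    exact hp
  · intro p hp
    rw [Finset.HasAntidiagonal.mem_antidiagonal] at hp ⊢
    rw [← inr'_add, hp]
  · intro p hp
    rw [Finset.HasAntidiagonal.mem_antidiagonal] at hp
    have h1 : ∀ a, p.1 (Sum.inl a) = 0 := by
      intro a
      have := DFunLike.congr_fun hp (Sum.inl a)
      simp only [Finsupp.add_apply, inr'_apply_inl] at this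
      omega
    have h2 : ∀ a, p.2 (Sum.inl a) = 0 := by
      intro a
      have := DFunLike.congr_fun hp (Sum.inl a)
      simp only [Finsupp.add_apply, inr'_apply_inl] at this
      omega
    dsimp only
    rw [inr'_comap p.1 h1, inr'_comap p.2 h2]
  · intro p hp
    dsimp only
    ext x <;> simp [Finsupp.comapDomain_apply, inr', Finsupp.mapDomain_apply Sum.inr_injective]
  · intro p hp
    rw [Finset.HasAntidiagonal.mem_antidiagonal] at hp
    have h1 : ∀ a, p.1 (Sum.inl a) = 0 := by
      intro a
      have := DFunLike.congr_fun hp (Sum.inl a)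
      simp only [Finsupp.add_apply, inr'_apply_inl] at this
      omega
    have h2 : ∀ a, p.2 (Sum.inl a) = 0 := by
      intro a
      have := DFunLike.congr_fun hp (Sum.inl a)
      simp only [Finsupp.add_apply, inr'_apply_inl] at this
      omega
    dsimp only
    rw [inr'_comap p.1 h1, inr'_comap p.2 h2]

variable {R : Type*} [CommRing R]

/-- The function underlying "set the `σ` variables to zero". -/
def projFun (F : MvPowerSeries (σ ⊕ τ) R) : MvPowerSeries τ R :=
  fun d => MvPowerSeries.coeff (inr' d) F

lemma coeff_projFun (F : MvPowerSeries (σ ⊕ τ) R) (d : τ →₀ ℕ) :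
    MvPowerSeries.coeff d (projFun F) = MvPowerSeries.coeff (inr' d) F := rfl

/-- "Set the `σ` variables to zero" as an algebra hom. -/
def projAlg : MvPowerSeries (σ ⊕ τ) R →ₐ[R] MvPowerSeries τ R where
  toFun := projFun
  map_one' := by
    ext d
    rw [coeff_projFun, MvPowerSeries.coeff_one, MvPowerSeries.coeff_one]
    simp [inr'_eq_zero_iff]
  map_mul' F G := by
    ext d
    rw [coeff_projFun, MvPowerSeries.coeff_mul, MvPowerSeries.coeff_mul,
      sum_antidiagonal_inr']
    rfl
  map_zero' := by
    ext d
    rw [coeff_projFun]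
    simp
  map_add' F G := by
    ext d
    rw [coeff_projFun]
    simp only [map_add]
    rfl
  commutes' r := by
    ext d
    rw [MvPowerSeries.algebraMap_apply, MvPowerSeries.algebraMap_apply, coeff_projFun,
      MvPowerSeries.coeff_C, MvPowerSeries.coeff_C]
    simp [inr'_eq_zero_iff]

lemma projAlg_apply (F : MvPowerSeries (σ ⊕ τ) R) : projAlg (R := R) F = projFun F := rfl

lemma projFun_coe_rename (q : MvPolynomial τ R) :
    projFun ((rename (Sum.inr : τ → σ ⊕ τ) q : MvPolynomial (σ ⊕ τ) R) :
      MvPowerSeries (σ ⊕ τ) R) = (q : MvPowerSeries τ R) := by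
  ext d
  rw [coeff_projFun, MvPolynomial.coeff_coe, MvPolynomial.coeff_coe, inr',
    MvPolynomial.coeff_rename_mapDomain _ Sum.inr_injective]

lemma projFun_X_inl (i : σ) :
    projFun (MvPowerSeries.X (Sum.inl i) : MvPowerSeries (σ ⊕ τ) R) = 0 := by
  ext d
  rw [coeff_projFun, MvPowerSeries.coeff_X]
  have : inr' (σ := σ) d ≠ Finsupp.single (Sum.inl i) 1 := by
    intro hEq
    have := DFunLike.congr_fun hEq (Sum.inl i)
    simp [inr'_apply_inl] at this
  simp [this]

lemma projFun_X_inr (j : τ) :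
    projFun (MvPowerSeries.X (Sum.inr j) : MvPowerSeries (σ ⊕ τ) R)
      = (MvPowerSeries.X j : MvPowerSeries τ R) := by
  ext d
  rw [coeff_projFun, MvPowerSeries.coeff_X, MvPowerSeries.coeff_X]
  have : inr' (σ := σ) d = Finsupp.single (Sum.inr j) 1 ↔ d = Finsupp.single j 1 := by
    rw [show (Finsupp.single (Sum.inr j) 1 : (σ ⊕ τ) →₀ ℕ) = inr' (Finsupp.single j 1) by
      simp [inr', Finsupp.mapDomain_single]]
    exact (inr'_inj (σ := σ)).eq_iff
  simp [this]

/-- A set-theoretic section of `projFun`. -/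
def sect (G : MvPowerSeries τ R) : MvPowerSeries (σ ⊕ τ) R :=
  fun e => if h : ∃ d : τ →₀ ℕ, inr' (σ := σ) d = e then MvPowerSeries.coeff h.choose G else 0

lemma projFun_sect (G : MvPowerSeries τ R) : projFun (sect (σ := σ) G) = G := by
  ext d
  rw [coeff_projFun]
  have hex : ∃ d' : τ →₀ ℕ, inr' (σ := σ) d' = inr' d := ⟨d, rfl⟩
  have h1 : MvPowerSeries.coeff (inr' (σ := σ) d) (sect G) = MvPowerSeries.coeff hex.choose G := by
    show (sect (σ := σ) G) (inr' d) = _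
    rw [sect, dif_pos hex]
  rw [h1, inr'_inj hex.choose_spec]

lemma mem_span_X_inl [Fintype σ] [LinearOrder σ] (F : MvPowerSeries (σ ⊕ τ) R)
    (hF : projFun F = 0) :
    F ∈ Ideal.span (Set.range fun i : σ =>
      (MvPowerSeries.X (Sum.inl i) : MvPowerSeries (σ ⊕ τ) R)) := by
  -- the cofactors
  set G : σ → MvPowerSeries (σ ⊕ τ) R := fun i =>
    fun e => if ∀ j < i, e (Sum.inl j) = 0
      then MvPowerSeries.coeff (e + Finsupp.single (Sum.inl i) 1) F else 0 with hG
  have hcoeffG : ∀ (i : σ) (e : (σ ⊕ τ) →₀ ℕ), MvPowerSeries.coeff e (G i)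
      = if ∀ j < i, e (Sum.inl j) = 0
        then MvPowerSeries.coeff (e + Finsupp.single (Sum.inl i) 1) F else 0 := fun _ _ => rfl
  have key : F = ∑ i : σ, MvPowerSeries.X (Sum.inl i) * G i := by
    ext d
    rw [map_sum]
    have hterm : ∀ i : σ, MvPowerSeries.coeff d (MvPowerSeries.X (Sum.inl i) * G i)
        = if d (Sum.inl i) ≠ 0 ∧ ∀ j < i, d (Sum.inl j) = 0
          then MvPowerSeries.coeff d F else 0 := by
      intro i
      set s₁ : (σ ⊕ τ) →₀ ℕ := Finsupp.single (Sum.inl i) 1 with hs₁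
      rw [MvPowerSeries.X_def, MvPowerSeries.coeff_monomial_mul, hcoeffG]
      by_cases h1 : s₁ ≤ d
      · rw [if_pos h1]
        have h1' : d (Sum.inl i) ≠ 0 := by
          have := Finsupp.single_le_iff.mp (hs₁ ▸ h1); omega
        have hsub : ∀ j < i, (d - s₁) (Sum.inl j) = d (Sum.inl j) := by
          intro j hj
          rw [Finsupp.tsub_apply, hs₁, Finsupp.single_apply, if_neg (by simp [hj.ne'])]
          omega
        have hback : d - s₁ + s₁ = d := tsub_add_cancel_of_le h1
        by_cases h2 : ∀ j < i, d (Sum.inl j) = 0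
        · rw [if_pos (by intro j hj; rw [hsub j hj]; exact h2 j hj), hback,
            if_pos ⟨h1', h2⟩, one_mul]
        · rw [if_neg (by intro hc; exact h2 fun j hj => (hsub j hj) ▸ hc j hj),
            if_neg (by rintro ⟨-, hc⟩; exact h2 hc), mul_zero]
      · rw [if_neg h1, if_neg ?_]
        rintro ⟨hc, -⟩
        exact h1 (hs₁ ▸ Finsupp.single_le_iff.mpr (by omega))
    rw [Finset.sum_congr rfl fun i _ => hterm i]
    by_cases hd : ∀ j : σ, d (Sum.inl j) = 0
    · -- all terms vanish and so does the coefficient of `F`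
      obtain ⟨q, hq⟩ := exists_inr' d hd
      have : MvPowerSeries.coeff d F = 0 := by
        rw [← hq, ← coeff_projFun, hF, map_zero]
      rw [this]
      simp
    · push_neg at hd
      have hne : (Finset.univ.filter fun j : σ => d (Sum.inl j) ≠ 0).Nonempty := by
        obtain ⟨j, hj⟩ := hd
        exact ⟨j, by simp [hj]⟩
      set i₀ := (Finset.univ.filter fun j : σ => d (Sum.inl j) ≠ 0).min' hne with hi₀
      have hi₀mem : d (Sum.inl i₀) ≠ 0 := by
        have := Finset.min'_mem _ hne
        simpa using this
      have hi₀min : ∀ j < i₀, d (Sum.inl j) = 0 := by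
        intro j hj
        by_contra hc
        exact absurd (Finset.min'_le _ j (by simp [hc])) (not_le.mpr hj)
      rw [Finset.sum_eq_single i₀]
      · rw [if_pos ⟨hi₀mem, hi₀min⟩]
      · intro b _ hb
        rw [if_neg]
        rintro ⟨hb1, hb2⟩
        rcases lt_or_gt_of_ne hb with hlt | hgt
        · exact hb1 (hi₀min b hlt)
        · exact hi₀mem (hb2 i₀ hgt)
      · intro hc; exact absurd (Finset.mem_univ i₀) hc
  rw [key]
  exact Ideal.sum_mem _ fun i _ =>
    Ideal.mul_mem_right _ _ (Ideal.subset_span ⟨i, rfl⟩)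

end Aux

/-- Splitting: for `f = x₁² + ⋯ + x_k² + h(x_{k+1},…,xₙ)` the Jacobian (Milnor)
algebra of `f` is isomorphic as a `ℂ`-algebra to that of `h`; in particular
`μ(f) = μ(h)`. -/
theorem stmt7 (k m : ℕ) (h : MvPolynomial (Fin m) ℂ)
    (f : MvPolynomial (Fin k ⊕ Fin m) ℂ)
    (hf : f = (∑ i : Fin k, X (Sum.inl i) ^ 2) + rename Sum.inr h)
    (Jf : Ideal (MvPowerSeries (Fin k ⊕ Fin m) ℂ))
    (hJf : Jf = Ideal.span (Set.range fun i : Fin k ⊕ Fin m =>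
      ((pderiv i f : MvPolynomial (Fin k ⊕ Fin m) ℂ) : MvPowerSeries (Fin k ⊕ Fin m) ℂ)))
    (Jh : Ideal (MvPowerSeries (Fin m) ℂ))
    (hJh : Jh = Ideal.span (Set.range fun i : Fin m =>
      ((pderiv i h : MvPolynomial (Fin m) ℂ) : MvPowerSeries (Fin m) ℂ))) :
    Nonempty ((MvPowerSeries (Fin k ⊕ Fin m) ℂ ⧸ Jf) ≃ₐ[ℂ] (MvPowerSeries (Fin m) ℂ ⧸ Jh)) ∧
    Module.finrank ℂ (MvPowerSeries (Fin k ⊕ Fin m) ℂ ⧸ Jf)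
      = Module.finrank ℂ (MvPowerSeries (Fin m) ℂ ⧸ Jh) := by
  classical
  -- the partial derivatives of `f`
  have hd1 : ∀ i : Fin k, pderiv (Sum.inl i) f = C 2 * X (Sum.inl i) := by
    intro i
    rw [hf, map_add, map_sum]
    have hz : pderiv (Sum.inl i) (rename (Sum.inr : Fin m → Fin k ⊕ Fin m) h) = 0 := by
      apply pderiv_eq_zero_of_notMem_vars
      intro hmem
      obtain ⟨j, -, hj⟩ := mem_vars_rename _ _ hmem
      exact Sum.inl_ne_inr hj.symm
    rw [hz, add_zero, Finset.sum_eq_single i]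
    · simp only [pderiv_pow, pderiv_X_self, mul_one]
      rw [show (C 2 : MvPolynomial (Fin k ⊕ Fin m) ℂ) = 2 from map_ofNat _ _]
      norm_num
    · intro l _ hl
      simp [pderiv_pow, pderiv_X_of_ne (fun hc => hl (Sum.inl_injective hc))]
    · simp
  have hd2 : ∀ j : Fin m, pderiv (Sum.inr j) f = rename Sum.inr (pderiv j h) := by
    intro j
    rw [hf, map_add, map_sum]
    have hz : ∀ l : Fin k, pderiv (Sum.inr j) ((X (Sum.inl l) : MvPolynomial (Fin k ⊕ Fin m) ℂ) ^ 2) = 0 := by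
      intro l
      simp [pderiv_pow, pderiv_X_of_ne (fun hc => Sum.inl_ne_inr hc)]
    rw [Finset.sum_congr rfl fun l _ => hz l, Finset.sum_const_zero, zero_add,
      pderiv_rename Sum.inr_injective]
  set π : MvPowerSeries (Fin k ⊕ Fin m) ℂ →ₐ[ℂ] MvPowerSeries (Fin m) ℂ :=
    projAlg (σ := Fin k) (τ := Fin m) (R := ℂ) with hπ
  -- π maps Jf into Jh
  have hπJf : ∀ a ∈ Jf, π a ∈ Jh := by
    intro a ha
    rw [hJf] at ha
    have hle : Ideal.span (Set.range fun i : Fin k ⊕ Fin m =>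
        ((pderiv i f : MvPolynomial (Fin k ⊕ Fin m) ℂ) : MvPowerSeries (Fin k ⊕ Fin m) ℂ))
        ≤ Ideal.comap π Jh := by
      rw [Ideal.span_le]
      rintro x ⟨i, rfl⟩
      rw [SetLike.mem_coe, Ideal.mem_comap]
      dsimp only
      rcases i with i | j
      · rw [hd1 i, MvPolynomial.coe_mul, MvPolynomial.coe_X, map_mul]
        have : π (MvPowerSeries.X (Sum.inl i)) = 0 := by
          rw [hπ, projAlg_apply, projFun_X_inl]
        rw [this, mul_zero]
        exact Jh.zero_mem
      · rw [hd2 j]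
        have : π ((rename (Sum.inr : Fin m → Fin k ⊕ Fin m) (pderiv j h) :
            MvPolynomial (Fin k ⊕ Fin m) ℂ) : MvPowerSeries (Fin k ⊕ Fin m) ℂ)
            = ((pderiv j h : MvPolynomial (Fin m) ℂ) : MvPowerSeries (Fin m) ℂ) := by
          rw [hπ, projAlg_apply, projFun_coe_rename]
        rw [this, hJh]
        exact Ideal.subset_span ⟨j, rfl⟩
    exact hle ha
  -- the span of the first block of variables is contained in Jf
  have hXJf : ∀ i : Fin k, (MvPowerSeries.X (Sum.inl i) :
      MvPowerSeries (Fin k ⊕ Fin m) ℂ) ∈ Jf := by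
    intro i
    have hX : (MvPowerSeries.X (Sum.inl i) : MvPowerSeries (Fin k ⊕ Fin m) ℂ)
        = MvPowerSeries.C (σ := Fin k ⊕ Fin m) (R := ℂ) 2⁻¹ *
          ((pderiv (Sum.inl i) f : MvPolynomial (Fin k ⊕ Fin m) ℂ) :
            MvPowerSeries (Fin k ⊕ Fin m) ℂ) := by
      rw [hd1 i, MvPolynomial.coe_mul, MvPolynomial.coe_X, MvPolynomial.coe_C, ← mul_assoc,
        ← map_mul, inv_mul_cancel₀ (two_ne_zero), map_one, one_mul]
    rw [hX, hJf]
    exact Ideal.mul_mem_left _ _ (Ideal.subset_span ⟨Sum.inl i, rfl⟩)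
  -- the kernel computation
  have hker : ∀ F : MvPowerSeries (Fin k ⊕ Fin m) ℂ, π F ∈ Jh → F ∈ Jf := by
    intro F hFm
    rw [hJh] at hFm
    obtain ⟨c, hc⟩ := Ideal.mem_span_range_iff_exists_fun.mp hFm
    set F₀ : MvPowerSeries (Fin k ⊕ Fin m) ℂ := ∑ j : Fin m, sect (c j) *
      ((pderiv (Sum.inr j) f : MvPolynomial (Fin k ⊕ Fin m) ℂ) :
        MvPowerSeries (Fin k ⊕ Fin m) ℂ) with hF₀
    have hF₀mem : F₀ ∈ Jf := by
      rw [hJf]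
      exact Ideal.sum_mem _ fun j _ =>
        Ideal.mul_mem_left _ _ (Ideal.subset_span ⟨Sum.inr j, rfl⟩)
    have hπF₀ : π F₀ = π F := by
      rw [hF₀, map_sum, ← hc]
      refine Finset.sum_congr rfl fun j _ => ?_
      rw [map_mul]
      congr 1
      · rw [hπ, projAlg_apply, projFun_sect]
      · rw [hd2 j, hπ, projAlg_apply, projFun_coe_rename]
    have hsub : F - F₀ ∈ Jf := by
      have h0 : projFun (F - F₀) = 0 := by
        have : π (F - F₀) = 0 := by rw [map_sub, hπF₀, sub_self]
        rw [hπ, projAlg_apply] at this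
        exact this
      have hmem := mem_span_X_inl (F - F₀) h0
      have hle : Ideal.span (Set.range fun i : Fin k =>
          (MvPowerSeries.X (Sum.inl i) : MvPowerSeries (Fin k ⊕ Fin m) ℂ)) ≤ Jf := by
        rw [Ideal.span_le]
        rintro x ⟨i, rfl⟩
        exact hXJf i
      exact hle hmem
    have : F = (F - F₀) + F₀ := by ring
    rw [this]
    exact Ideal.add_mem _ hsub hF₀mem
  -- assemble the isomorphism
  have hwd : ∀ a ∈ Jf, ((Ideal.Quotient.mkₐ ℂ Jh).comp π) a = 0 := by
    intro a ha
    simp only [AlgHom.comp_apply, Ideal.Quotient.mkₐ_eq_mk]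
    exact Ideal.Quotient.eq_zero_iff_mem.mpr (hπJf a ha)
  set Φ := Ideal.Quotient.liftₐ Jf ((Ideal.Quotient.mkₐ ℂ Jh).comp π) hwd with hΦ
  have hΦmk : ∀ F, Φ (Ideal.Quotient.mk Jf F) = Ideal.Quotient.mk Jh (π F) := by
    intro F
    rw [hΦ, Ideal.Quotient.liftₐ_apply]
    rfl
  have hsurj : Function.Surjective Φ := by
    intro y
    obtain ⟨G, rfl⟩ := Ideal.Quotient.mk_surjective y
    refine ⟨Ideal.Quotient.mk Jf (sect G), ?_⟩
    rw [hΦmk, hπ, projAlg_apply, projFun_sect]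
  have hinj : Function.Injective Φ := by
    rw [injective_iff_map_eq_zero]
    intro a ha
    obtain ⟨F, rfl⟩ := Ideal.Quotient.mk_surjective a
    rw [hΦmk] at ha
    exact Ideal.Quotient.eq_zero_iff_mem.mpr
      (hker F (Ideal.Quotient.eq_zero_iff_mem.mp ha))
  let e := AlgEquiv.ofBijective Φ ⟨hinj, hsurj⟩
  exact ⟨⟨e⟩, e.toLinearEquiv.finrank_eq⟩
end

section
/- Let G be a finite group acting linearly on ℂ^n and suppose a G-invariant holomorphic germ f with critical point at 0 satisfies: the Jacobian ideal J_f contains every G-invariant germ vanishing at the origin (i.e., J_f ⊇ 𝔪_G). Then the critical point of f at the origin is isolated. -/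
open MvPolynomial Matrix

/-- Substitution of a linear change of variables given by a matrix `A`. -/
noncomputable def polyComp {n : ℕ} (A : Matrix (Fin n) (Fin n) ℂ) :
    MvPolynomial (Fin n) ℂ →ₐ[ℂ] MvPolynomial (Fin n) ℂ :=
  MvPolynomial.aeval fun i => ∑ j, MvPolynomial.C (A i j) * MvPolynomial.X j

lemma eval_polyComp {n : ℕ} (A : Matrix (Fin n) (Fin n) ℂ)
    (p : MvPolynomial (Fin n) ℂ) (x : Fin n → ℂ) :
    eval x (polyComp A p) = eval (A.mulVec x) p := by
  have h := comp_aeval_apply (R := ℂ)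
    (f := fun i => ∑ j, MvPolynomial.C (A i j) * MvPolynomial.X j)
    (φ := (MvPolynomial.aeval x : MvPolynomial (Fin n) ℂ →ₐ[ℂ] ℂ)) p
  have h2 : ∀ (y : Fin n → ℂ) (q : MvPolynomial (Fin n) ℂ),
      (MvPolynomial.aeval y : MvPolynomial (Fin n) ℂ →ₐ[ℂ] ℂ) q = eval y q :=
    fun y q => DFunLike.congr_fun (coe_aeval_eq_eval y) q
  rw [polyComp, ← h2, h, ← h2]
  have : (fun i => (MvPolynomial.aeval x : MvPolynomial (Fin n) ℂ →ₐ[ℂ] ℂ)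
      (∑ j, MvPolynomial.C (A i j) * MvPolynomial.X j)) = A.mulVec x := by
    funext i
    simp [Matrix.mulVec, dotProduct]
  rw [this]

lemma polyComp_polyComp {n : ℕ} (A B : Matrix (Fin n) (Fin n) ℂ)
    (p : MvPolynomial (Fin n) ℂ) :
    polyComp A (polyComp B p) = polyComp (B * A) p := by
  have : (polyComp A).comp (polyComp B) = polyComp (B * A) := by
    apply MvPolynomial.algHom_ext
    intro i
    simp [polyComp, Finset.mul_sum, Finset.sum_mul, Matrix.mul_apply]
    rw [Finset.sum_comm]
    congr 1; funext j; exact Finset.sum_congr rfl fun k _ => by ring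
  exact DFunLike.congr_fun this p

/-- If the Jacobian ideal of a `G`-invariant germ `f` with critical point at `0`
contains every `G`-invariant germ vanishing at the origin (`J_f ⊇ 𝔪_G`), then the
critical point of `f` at the origin is isolated. -/
theorem stmt14 (n : ℕ) (G : Type*) [Group G] [Finite G]
    (τ : G →* Matrix.GeneralLinearGroup (Fin n) ℂ)
    (f : MvPolynomial (Fin n) ℂ)
    (hf : ∀ g : G, polyComp ((τ g⁻¹ : Matrix (Fin n) (Fin n) ℂ)) f = f)
    (hcrit : ∀ i : Fin n, eval (0 : Fin n → ℂ) (pderiv i f) = 0)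
    (J : Ideal (MvPolynomial (Fin n) ℂ))
    (hJ : J = Ideal.span (Set.range fun i : Fin n => pderiv i f))
    (hm : ∀ q : MvPolynomial (Fin n) ℂ,
      (∀ g : G, polyComp ((τ g⁻¹ : Matrix (Fin n) (Fin n) ℂ)) q = q) →
      eval (0 : Fin n → ℂ) q = 0 → q ∈ J) :
    ∃ U ∈ nhds (0 : Fin n → ℂ), ∀ x ∈ U,
      (∀ i : Fin n, eval x (pderiv i f) = 0) → x = 0 := by
  refine ⟨Set.univ, Filter.univ_mem, fun x _ hx => ?_⟩
  by_contra hx0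
  letI : Fintype G := Fintype.ofFinite G
  -- orbit points are nonzero
  have hs0 : ∀ g : G, ((τ g : Matrix (Fin n) (Fin n) ℂ)).mulVec x ≠ 0 := by
    intro g hzero
    apply hx0
    have : ((τ g⁻¹ : Matrix (Fin n) (Fin n) ℂ)).mulVec
        (((τ g : Matrix (Fin n) (Fin n) ℂ)).mulVec x) = x := by
      rw [Matrix.mulVec_mulVec]
      have : (τ g⁻¹ : Matrix (Fin n) (Fin n) ℂ) * (τ g : Matrix (Fin n) (Fin n) ℂ)
          = 1 := by
        rw [← Units.val_mul, ← _root_.map_mul, inv_mul_cancel, _root_.map_one, Units.val_one]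
      rw [this, Matrix.one_mulVec]
    rw [← this, hzero, Matrix.mulVec_zero]
  choose i hi using fun g => Function.ne_iff.mp (hs0 g)
  set r : MvPolynomial (Fin n) ℂ :=
    ∏ g : G, (X (i g) - C (((τ g : Matrix (Fin n) (Fin n) ℂ)).mulVec x (i g))) with hr
  have hr0 : eval (0 : Fin n → ℂ) r ≠ 0 := by
    rw [hr, map_prod]
    refine Finset.prod_ne_zero_iff.mpr fun g _ => ?_
    simpa using hi g
  have hrs : ∀ g : G, eval (((τ g : Matrix (Fin n) (Fin n) ℂ)).mulVec x) r = 0 := by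
    intro g
    rw [hr, map_prod]
    exact Finset.prod_eq_zero (Finset.mem_univ g) (by simp)
  set p : MvPolynomial (Fin n) ℂ := C (eval (0 : Fin n → ℂ) r) - r with hp
  have hp0 : eval (0 : Fin n → ℂ) p = 0 := by simp [hp]
  have hps : ∀ g : G, eval (((τ g : Matrix (Fin n) (Fin n) ℂ)).mulVec x) p
      = eval (0 : Fin n → ℂ) r := by
    intro g; simp [hp, hrs g]
  set q : MvPolynomial (Fin n) ℂ :=
    ∏ g : G, polyComp ((τ g⁻¹ : Matrix (Fin n) (Fin n) ℂ)) p with hq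
  -- q is invariant
  have hinv : ∀ h : G, polyComp ((τ h⁻¹ : Matrix (Fin n) (Fin n) ℂ)) q = q := by
    intro h
    rw [hq, map_prod]
    have key : ∀ g : G,
        polyComp ((τ h⁻¹ : Matrix (Fin n) (Fin n) ℂ))
          (polyComp ((τ g⁻¹ : Matrix (Fin n) (Fin n) ℂ)) p)
        = polyComp ((τ (h * g)⁻¹ : Matrix (Fin n) (Fin n) ℂ)) p := by
      intro g
      rw [polyComp_polyComp]
      rw [← Units.val_mul, ← _root_.map_mul, _root_.mul_inv_rev]
    calc (∏ g : G, polyComp ((τ h⁻¹ : Matrix (Fin n) (Fin n) ℂ))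
            (polyComp ((τ g⁻¹ : Matrix (Fin n) (Fin n) ℂ)) p))
        = ∏ g : G, polyComp ((τ (h * g)⁻¹ : Matrix (Fin n) (Fin n) ℂ)) p := by
          exact Finset.prod_congr rfl fun g _ => key g
      _ = ∏ g : G, polyComp ((τ g⁻¹ : Matrix (Fin n) (Fin n) ℂ)) p :=
          Fintype.prod_equiv (Equiv.mulLeft h)
            (fun g => polyComp ((τ (h * g)⁻¹ : Matrix (Fin n) (Fin n) ℂ)) p)
            (fun g => polyComp ((τ g⁻¹ : Matrix (Fin n) (Fin n) ℂ)) p)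
            (fun g => by simp)
  -- q vanishes at 0
  have hq0 : eval (0 : Fin n → ℂ) q = 0 := by
    have : Nonempty G := ⟨1⟩
    rw [hq, map_prod]
    refine Finset.prod_eq_zero (Finset.mem_univ (1 : G)) ?_
    rw [eval_polyComp, Matrix.mulVec_zero, hp0]
  -- hence q ∈ J, so eval x q = 0
  have hqJ : q ∈ J := hm q hinv hq0
  have hevalJ : eval x q = 0 := by
    rw [hJ] at hqJ
    have : Ideal.span (Set.range fun i : Fin n => pderiv i f)
        ≤ RingHom.ker (eval x) := by
      rw [Ideal.span_le]
      rintro _ ⟨j, rfl⟩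
      exact hx j
    exact this hqJ
  -- but eval x q ≠ 0
  have : eval x q ≠ 0 := by
    rw [hq, map_prod]
    refine Finset.prod_ne_zero_iff.mpr fun g _ => ?_
    rw [eval_polyComp, hps g⁻¹, ]
    exact hr0
  exact this hevalJ
end

section
/- Let p be a prime of the form p = d_1 ⋯ d_n + 1 with n odd and each d_i ≥ 2, with the weighted diagonal ℤ/p-action on ℂ^n with weights w_1 = 1, w_{i+1} = (−1)^i d_1⋯d_i. Then no nonzero τ-invariant quadratic form exists, i.e., rk(τ) = 0; equivalently, for all i, j ∈ {1,…,n}, w_i + w_j ≢ 0 (mod p). -/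
/-!
Write `Q k = d₀⋯d_{k-1}`, so that the loop weights are `w k = (-1)^k Q k`. Since every `dᵢ ≥ 2`,
the `Q k` are strictly increasing and `2 Q k ≤ d₀⋯dₙ`. Hence `0 < |wᵢ + wⱼ| ≤ Qᵢ + Qⱼ ≤ d₀⋯dₙ < p`:
the sum cannot vanish, because `|wᵢ| = |wⱼ|` forces `i = j` and `2 wᵢ ≠ 0`.
-/

open Finset

theorem Finset.two_mul_prod_le_prod_of_ssubset {ι : Type*} {s t : Finset ι} (d : ι → ℕ)
    (hst : s ⊂ t) (hd : ∀ i ∈ t, 2 ≤ d i) : 2 * ∏ i ∈ s, d i ≤ ∏ i ∈ t, d i := by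
  classical
  obtain ⟨x, hxt, hxs⟩ := exists_of_ssubset hst
  have hx : 2 ≤ ∏ i ∈ t \ s, d i :=
    (hd x hxt).trans <| single_le_prod' (fun i hi => one_le_two.trans (hd i (mem_sdiff.1 hi).1))
      (mem_sdiff.2 ⟨hxt, hxs⟩)
  rw [← prod_sdiff hst.subset]
  exact Nat.mul_le_mul_right _ hx

theorem Fin.eq_neg_one_pow_mul_prod_Iio {n : ℕ} (d : Fin (n + 1) → ℤ) (w : Fin (n + 1) → ℤ)
    (hw0 : w 0 = 1)
    (hw : ∀ k : Fin (n + 1), ∀ h : k.val + 1 < n + 1,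
      w ⟨k.val + 1, h⟩ = (-1 : ℤ) ^ (k.val + 1) * ∏ j ∈ Iic k, d j)
    (k : Fin (n + 1)) : w k = (-1 : ℤ) ^ k.val * ∏ j ∈ Iio k, d j := by
  induction k using Fin.cases with
  | zero =>
    rw [hw0, show Iio (0 : Fin (n + 1)) = ∅ from Iio_bot]
    simp
  | succ k =>
    have hIio : Iic k.castSucc = Iio k.succ := by
      ext j
      simp [Fin.le_def, Fin.lt_def]
    rw [← hIio]
    exact hw k.castSucc k.succ.isLt

theorem Int.add_ne_zero_of_injective_abs {ι : Type*} {w : ι → ℤ}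
    (hinj : Function.Injective fun k => |w k|) (hw : ∀ k, w k ≠ 0) (i j : ι) : w i + w j ≠ 0 := by
  intro h
  obtain rfl : i = j := hinj (by simp only [eq_neg_of_add_eq_zero_left h, abs_neg])
  exact hw i (by omega)

theorem stmt17_general (n : ℕ) (d : Fin (n + 1) → ℕ) (hd : ∀ i, 2 ≤ d i)
    (w : Fin (n + 1) → ℤ) (hw0 : w 0 = 1)
    (hw : ∀ k : Fin (n + 1), ∀ h : k.val + 1 < n + 1,
      w ⟨k.val + 1, h⟩ = (-1 : ℤ) ^ (k.val + 1) * ∏ j ∈ Finset.Iic k, (d j : ℤ)) :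
    ∀ i j : Fin (n + 1), ¬ (((∏ i, d i : ℕ) + 1 : ℤ) ∣ w i + w j) := by
  set Q : Fin (n + 1) → ℕ := fun k => ∏ m ∈ Iio k, d m
  have hQ_pos (k) : 0 < Q k := prod_pos fun m _ => two_pos.trans_le (hd m)
  have hQ_mono : StrictMono Q := fun a b hab =>
    (lt_two_mul_self (hQ_pos a)).trans_le
      (two_mul_prod_le_prod_of_ssubset d (Iio_ssubset_Iio hab) fun i _ => hd i)
  have hQ_le (k) : 2 * Q k ≤ ∏ m, d m :=
    two_mul_prod_le_prod_of_ssubset d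
      (ssubset_univ_iff.2 fun h => by simpa using h.ge (mem_univ k)) fun i _ => hd i
  have habs (k) : |w k| = Q k := by
    rw [Fin.eq_neg_one_pow_mul_prod_Iio _ w hw0 hw k, abs_mul, abs_neg_one_pow, one_mul,
      ← Nat.cast_prod, Int.abs_natCast]
  have hw_ne (k) : w k ≠ 0 := abs_pos.1 (by rw [habs]; exact_mod_cast hQ_pos k)
  have habs_inj : Function.Injective fun k => |w k| := fun a b h =>
    hQ_mono.injective (by simpa only [habs, Nat.cast_inj] using h)
  intro i j hdvd
  refine Int.add_ne_zero_of_injective_abs habs_inj hw_ne i j (Int.eq_zero_of_abs_lt_dvd hdvd ?_)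
  calc |w i + w j| ≤ |w i| + |w j| := abs_add_le _ _
    _ = Q i + Q j := by rw [habs, habs]
    _ < ((∏ m, d m : ℕ) + 1 : ℤ) := by have := hQ_le i; have := hQ_le j; omega

/-- For a prime `p = d₀⋯dₙ + 1` with an odd number of factors `dᵢ ≥ 2` and the
loop weights `w₀ = 1`, `w_{k+1} = (-1)^{k+1} d₀⋯d_k`, no sum `wᵢ + wⱼ` is
divisible by `p`; hence there is no nonzero invariant quadratic form. -/
theorem stmt17 (n : ℕ) (hn : Odd (n + 1)) (d : Fin (n + 1) → ℕ) (hd : ∀ i, 2 ≤ d i)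
    (hp : Nat.Prime ((∏ i, d i) + 1))
    (w : Fin (n + 1) → ℤ) (hw0 : w 0 = 1)
    (hw : ∀ k : Fin (n + 1), ∀ h : k.val + 1 < n + 1,
      w ⟨k.val + 1, h⟩ = (-1 : ℤ) ^ (k.val + 1) * ∏ j ∈ Finset.Iic k, (d j : ℤ)) :
    ∀ i j : Fin (n + 1), ¬ (((∏ i, d i : ℕ) + 1 : ℤ) ∣ w i + w j) :=
  stmt17_general n d hd w hw0 hw
end
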